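/- Let Γ be a free group of finite rank n > 1, p a prime, and k ≥ 2, and let π : Γ/Γ^S_{k+2} → Γ/Γ^S_{k+1} be the canonical projection. There is no group homomorphism s : Aut(Γ/Γ^S_{k+1}) → Aut(Γ/Γ^S_{k+2}) such that π ∘ s(φ) = φ ∘ π for every automorphism φ of Γ/Γ^S_{k+1}; that is, the extension 0 → Hom(Γ/Γ^S_2, Γ^S_{k+1}/Γ^S_{k+2}) → Aut(Γ/Γ^S_{k+2}) → Aut(Γ/Γ^S_{k+1}) → 1 does not split. -/

import Mathlib

/-!
Let `α` be the transvection `x₀ ↦ x₀ x₁ ^ p ^ (k - 1)` of the free group `F`. As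
`x₁ ^ p ^ k ∈ F_{k+1}`, it induces an automorphism `φ` of `F / F_{k+1}` with `φ ^ p = 1`, so a
splitting `s` would give `ψ = s φ` with `ψ ^ p = 1`. Lift `ψ` to an endomorphism `β` of `F` and
look at exponent sums with coefficients in `R = ℤ / p ^ (k + 1)`: since `F_{j+1}` maps into
`p ^ j R^n`, `β` acts on `R^n` as `1 + p ^ (k - 1) N + p ^ k E` with `N` the elementary matrix
`e₁₀`, and for `k ≥ 2` the `p`-th power of this map is `1 + p ^ k N ≠ 1`. On the other hand
`F_{k+2}` maps to `0`, so `ψ ^ p = 1` forces `β ^ p` to act trivially.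
-/

open scoped commutatorElement

def stallings (p : ℕ) (G : Type*) [Group G] : ℕ → Subgroup G
  | 0 => ⊤
  | 1 => ⊤
  | (k + 2) =>
    Subgroup.closure
      {x : G | (∃ g : G, ∃ y ∈ stallings p G (k + 1), x = ⁅g, y⁆) ∨
        ∃ y ∈ stallings p G (k + 1), x = y ^ p}

theorem closure_normal_of_conj {G : Type*} [Group G] {s : Set G}
    (h : ∀ g : G, ∀ x ∈ s, g * x * g⁻¹ ∈ s) : (Subgroup.closure s).Normal := by
  constructor
  intro n hn g
  have key : Subgroup.closure s ≤
      Subgroup.comap (MulAut.conj g).toMonoidHom (Subgroup.closure s) := by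
    rw [Subgroup.closure_le]
    intro x hx
    have : (MulAut.conj g).toMonoidHom x ∈ Subgroup.closure s :=
      Subgroup.subset_closure (by simpa [MulAut.conj_apply] using h g x hx)
    exact this
  have := key hn
  rw [Subgroup.mem_comap] at this
  simpa [MulAut.conj_apply] using this

instance stallings_normal (p : ℕ) (G : Type*) [Group G] (k : ℕ) :
    (stallings p G k).Normal := by
  induction k with
  | zero => simp only [stallings]; infer_instance
  | succ n ih =>
    cases n with
    | zero => simp only [stallings]; infer_instance
    | succ m =>
      simp only [stallings]
      apply closure_normal_of_conj
      rintro g x (⟨a, y, hy, rfl⟩ | ⟨y, hy, rfl⟩)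
      · refine Or.inl ⟨g * a * g⁻¹, g * y * g⁻¹, ih.conj_mem y hy g, ?_⟩
        simp only [commutatorElement_def]
        group
      · refine Or.inr ⟨g * y * g⁻¹, ih.conj_mem y hy g, ?_⟩
        rw [conj_pow]

theorem stallings_succ_le (p : ℕ) (G : Type*) [Group G] :
    ∀ k, stallings p G (k + 1) ≤ stallings p G k := by
  intro k
  induction k with
  | zero => exact le_top
  | succ n ih =>
    cases n with
    | zero => exact le_top
    | succ m =>
      show stallings p G (m + 3) ≤ stallings p G (m + 2)
      have h3 : stallings p G (m + 3) = Subgroup.closure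
          {x : G | (∃ g : G, ∃ y ∈ stallings p G (m + 2), x = ⁅g, y⁆) ∨
            ∃ y ∈ stallings p G (m + 2), x = y ^ p} := rfl
      rw [h3, Subgroup.closure_le]
      rintro x (⟨a, y, hy, rfl⟩ | ⟨y, hy, rfl⟩)
      · show ⁅a, y⁆ ∈ stallings p G (m + 2)
        simp only [stallings]
        exact Subgroup.subset_closure (Or.inl ⟨a, y, ih hy, rfl⟩)
      · show y ^ p ∈ stallings p G (m + 2)
        simp only [stallings]
        exact Subgroup.subset_closure (Or.inr ⟨y, ih hy, rfl⟩)

theorem stallings_antitone (p : ℕ) (G : Type*) [Group G] :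
    Antitone (stallings p G) :=
  antitone_nat_of_succ_le (stallings_succ_le p G)

/-- The canonical projection `G/G^S_{k'} → G/G^S_k` for `k ≤ k'`. -/
def stallingsProj (p : ℕ) (G : Type*) [Group G] (k k' : ℕ) (h : k ≤ k') :
    (G ⧸ stallings p G k') →* (G ⧸ stallings p G k) :=
  QuotientGroup.map _ _ (MonoidHom.id G) (fun _ hx => stallings_antitone p G h hx)


section Stallings

variable {p : ℕ} {G H : Type*} [Group G] [Group H]

theorem stallings_map_le (f : G →* H) : ∀ j, (stallings p G j).map f ≤ stallings p H j
  | 0 | 1 => le_top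
  | j + 2 => by
    simp only [stallings]
    rw [MonoidHom.map_closure, Subgroup.closure_le]
    rintro _ ⟨x, ⟨g, y, hy, rfl⟩ | ⟨y, hy, rfl⟩, rfl⟩
    · refine Subgroup.subset_closure (Or.inl ⟨f g, f y, ?_, map_commutatorElement f g y⟩)
      exact stallings_map_le f (j + 1) ⟨y, hy, rfl⟩
    · exact Subgroup.subset_closure (Or.inr ⟨f y, stallings_map_le f (j + 1) ⟨y, hy, rfl⟩,
        map_pow f y p⟩)

instance stallings_characteristic (k : ℕ) : (stallings p G k).Characteristic :=
  Subgroup.characteristic_iff_map_le.mpr fun e => stallings_map_le e.toMonoidHom k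

theorem pow_mem_stallings_succ {x : G} {j : ℕ} (hx : x ∈ stallings p G j) :
    x ^ p ∈ stallings p G (j + 1) := by
  cases j with
  | zero => exact Subgroup.mem_top _
  | succ j => exact Subgroup.subset_closure (Or.inr ⟨x, hx, rfl⟩)

theorem pow_pow_mem_stallings (x : G) : ∀ j, x ^ p ^ j ∈ stallings p G (j + 1)
  | 0 => Subgroup.mem_top _
  | j + 1 => by
    rw [pow_succ, pow_mul]
    exact pow_mem_stallings_succ (pow_pow_mem_stallings x j)

theorem stallings_le_range_powMonoidHom (A : Type*) [CommGroup A] :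
    ∀ j, stallings p A (j + 1) ≤ (powMonoidHom (p ^ j)).range
  | 0 => fun x _ => ⟨x, pow_one x⟩
  | j + 1 => by
    simp only [stallings]
    rw [Subgroup.closure_le]
    rintro _ (⟨g, y, -, rfl⟩ | ⟨y, hy, rfl⟩)
    · rw [commutatorElement_eq_one_iff_commute.mpr (Commute.all g y)]
      exact one_mem _
    · obtain ⟨z, rfl⟩ := stallings_le_range_powMonoidHom A j hy
      exact ⟨z, by simp [pow_succ, pow_mul]⟩

end Stallings

theorem one_add_pow_of_mul_self_eq_zero {S : Type*} [Ring S] {u : S} (hu : u * u = 0) :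
    ∀ m : ℕ, (1 + u) ^ m = 1 + m • u
  | 0 => by simp
  | m + 1 => by
    rw [pow_succ, one_add_pow_of_mul_self_eq_zero hu m]
    simp only [add_mul, mul_add, one_mul, mul_one, smul_mul_assoc, hu, smul_zero, succ_nsmul]
    abel

theorem one_add_smul_add_smul_pow {R S : Type*} [CommRing R] [Ring S] [Algebra R S] {p k : ℕ}
    (hk : 2 ≤ k) (hp : (p : R) ^ (k + 1) = 0) {N : S} (hN : N * N = 0) (E : S) :
    (1 + (p : R) ^ (k - 1) • N + (p : R) ^ k • E) ^ p = 1 + (p : R) ^ k • N := by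
  set c : R := (p : R)
  have hck : c ^ k = c ^ (k - 1) * c := by rw [← pow_succ, Nat.sub_add_cancel (by omega)]
  have hu : c ^ (k - 1) • N + c ^ k • E = c ^ (k - 1) • (N + c • E) := by
    rw [smul_add, smul_smul, ← hck]
  have hsq : (N + c • E) * (N + c • E) = c • (N * E + E * N + c • (E * E)) := by
    simp only [add_mul, mul_add, smul_mul_assoc, mul_smul_comm, hN, smul_add, smul_smul]
    abel
  have hvanish : c ^ (k - 1) * c ^ (k - 1) * c = 0 := by
    rw [← pow_add, ← pow_succ, show k - 1 + (k - 1) + 1 = k + 1 + (k - 2) by omega, pow_add, hp,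
      zero_mul]
  have hu2 : (c ^ (k - 1) • (N + c • E)) * (c ^ (k - 1) • (N + c • E)) = 0 := by
    rw [smul_mul_smul_comm, hsq, smul_smul, hvanish, zero_smul]
  rw [add_assoc, hu, one_add_pow_of_mul_self_eq_zero hu2, ← Nat.cast_smul_eq_nsmul R, smul_smul,
    ← pow_succ', Nat.sub_add_cancel (by omega), smul_add, smul_smul, ← pow_succ, hp, zero_smul,
    add_zero]

theorem MulAut.coe_pow {M : Type*} [Mul M] (f : MulAut M) (n : ℕ) : ⇑(f ^ n) = (⇑f)^[n] :=
  hom_coe_pow _ (coe_one M) (coe_mul M) f n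

namespace FreeGroup

variable {ι : Type*}

theorem exists_comp_eq_of_surjective {G H : Type*} [Group G] [Group H] {π : G →* H}
    (hπ : Function.Surjective π) (f : FreeGroup ι →* H) :
    ∃ g : FreeGroup ι →* G, π.comp g = f :=
  ⟨lift (Function.surjInv hπ ∘ f ∘ of),
    ext_hom _ _ fun i => by simp [Function.surjInv_eq hπ]⟩

section Transvection

variable [DecidableEq ι] {i j : ι}

def transvection (i j : ι) (m : ℤ) : FreeGroup ι →* FreeGroup ι :=
  lift (Function.update of i (of i * of j ^ m))

theorem transvection_of_self (m : ℤ) : transvection i j m (of i) = of i * of j ^ m := by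
  simp [transvection]

theorem transvection_of_of_ne (m : ℤ) {l : ι} (hl : l ≠ i) :
    transvection i j m (of l) = of l := by
  simp [transvection, hl]

theorem transvection_comp_transvection (hij : i ≠ j) (m m' : ℤ) :
    (transvection i j m).comp (transvection i j m') = transvection i j (m + m') := by
  refine ext_hom _ _ fun l => ?_
  obtain rfl | hl := eq_or_ne l i
  · simp [transvection_of_self, transvection_of_of_ne _ hij.symm, mul_assoc, zpow_add]
  · simp [transvection_of_of_ne _ hl]

theorem transvection_zero : transvection i j 0 = MonoidHom.id _ :=
  ext_hom _ _ fun l => by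
    obtain rfl | hl := eq_or_ne l i
    · simp [transvection_of_self]
    · simp [transvection_of_of_ne _ hl]

theorem iterate_transvection (hij : i ≠ j) (m : ℤ) :
    ∀ r : ℕ, (⇑(transvection i j m))^[r] = transvection i j (r * m)
  | 0 => by simp [transvection_zero]
  | r + 1 => by
    rw [Function.iterate_succ', iterate_transvection hij m r, ← MonoidHom.coe_comp,
      transvection_comp_transvection hij]
    push_cast
    ring_nf

def transvectionEquiv (hij : i ≠ j) (m : ℤ) : FreeGroup ι ≃* FreeGroup ι :=
  (transvection i j m).toMulEquiv (transvection i j (-m))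
    (by rw [transvection_comp_transvection hij, neg_add_cancel, transvection_zero])
    (by rw [transvection_comp_transvection hij, add_neg_cancel, transvection_zero])

theorem mk_comp_transvection_pow_eq (p k : ℕ) :
    (QuotientGroup.mk' (stallings p (FreeGroup ι) (k + 1))).comp
      (transvection i j (p ^ k : ℕ)) = QuotientGroup.mk' _ := by
  refine ext_hom _ _ fun l => ?_
  obtain rfl | hl := eq_or_ne l i
  · have hj : QuotientGroup.mk' (stallings p (FreeGroup ι) (k + 1)) (of j ^ p ^ k) = 1 :=
      (QuotientGroup.eq_one_iff _).mpr (pow_pow_mem_stallings _ k)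
    rw [MonoidHom.comp_apply, transvection_of_self, zpow_natCast, _root_.map_mul, hj, mul_one]
  · simp [transvection_of_of_ne _ hl]

theorem congr_transvectionEquiv_pow_eq_one {p k : ℕ} (hk : 1 ≤ k) (hij : i ≠ j)
    (h : (stallings p (FreeGroup ι) (k + 1)).map (transvectionEquiv hij (p ^ (k - 1) : ℕ)) =
      stallings p (FreeGroup ι) (k + 1)) :
    QuotientGroup.congr _ _ (transvectionEquiv hij (p ^ (k - 1) : ℕ)) h ^ p = 1 := by
  refine MulEquiv.ext fun x => QuotientGroup.induction_on x fun g => ?_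
  have hsemi : Function.Semiconj (QuotientGroup.mk' (stallings p (FreeGroup ι) (k + 1)))
      (transvection i j (p ^ (k - 1) : ℕ)) (QuotientGroup.congr _ _ _ h) :=
    fun g => (QuotientGroup.congr_mk' _ _ _ h g).symm
  rw [MulAut.coe_pow]
  refine (hsemi.iterate_right p g).symm.trans ?_
  rw [iterate_transvection hij, ← Nat.cast_mul, ← pow_succ', Nat.sub_add_cancel hk,
    ← MonoidHom.comp_apply, mk_comp_transvection_pow_eq]
  rfl

end Transvection

section ToFinsupp

variable (R : Type*) [CommRing R]

noncomputable def toFinsupp : FreeGroup ι →* Multiplicative (ι →₀ R) :=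
  lift fun i => Multiplicative.ofAdd (Finsupp.single i 1)

@[simp]
theorem toAdd_toFinsupp_of (i : ι) : (toFinsupp R (of i)).toAdd = Finsupp.single i 1 := by
  simp [toFinsupp]

variable {R}

theorem toAdd_apply_eq_apply_toFinsupp {M : Type*} [AddCommGroup M] [Module R M]
    (f : FreeGroup ι →* Multiplicative M) (T : (ι →₀ R) →ₗ[R] M)
    (hT : ∀ i, T (Finsupp.single i 1) = (f (of i)).toAdd) (g : FreeGroup ι) :
    (f g).toAdd = T (toFinsupp R g).toAdd :=
  congrArg Multiplicative.toAdd <| DFunLike.congr_fun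
    (ext_hom f ((AddMonoidHom.toMultiplicative T.toAddMonoidHom).comp (toFinsupp R))
      fun i => by simp [hT]) g

theorem exists_toAdd_toFinsupp_eq_smul_of_mem_stallings {p k : ℕ} {g : FreeGroup ι}
    (hg : g ∈ stallings p (FreeGroup ι) (k + 1)) :
    ∃ w : ι →₀ R, (toFinsupp R g).toAdd = p ^ k • w := by
  obtain ⟨w, hw⟩ := stallings_le_range_powMonoidHom _ k
    (stallings_map_le (toFinsupp R) _ ⟨g, hg, rfl⟩)
  exact ⟨w.toAdd, by rw [← hw, powMonoidHom_apply, toAdd_pow]⟩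

variable [DecidableEq ι] {i j : ι}

open Finsupp in
theorem toAdd_toFinsupp_transvection (m : ℤ) (g : FreeGroup ι) :
    (toFinsupp R (transvection i j m g)).toAdd =
      (1 + (m : R) • lsingle j ∘ₗ lapply i : Module.End R (ι →₀ R))
        (toFinsupp R g).toAdd := by
  refine toAdd_apply_eq_apply_toFinsupp ((toFinsupp R).comp (transvection i j m)) _
    (fun l => ?_) g
  obtain rfl | hl := eq_or_ne l i
  · simp [transvection_of_self, ← Int.cast_smul_eq_zsmul R]
  · simp [transvection_of_of_ne _ hl, hl]

open Finsupp in
theorem exists_toAdd_toFinsupp_eq_of_comp_mk_eq_transvection {p k : ℕ} {m : ℤ}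
    {β : FreeGroup ι →* FreeGroup ι}
    (hβ : (QuotientGroup.mk' (stallings p (FreeGroup ι) (k + 1))).comp β =
      (QuotientGroup.mk' _).comp (transvection i j m)) :
    ∃ E : Module.End R (ι →₀ R), ∀ g, (toFinsupp R (β g)).toAdd =
      (1 + (m : R) • lsingle j ∘ₗ lapply i + (p : R) ^ k • E : Module.End R (ι →₀ R))
        (toFinsupp R g).toAdd := by
  have hw (l : ι) : ∃ w : ι →₀ R,
      (toFinsupp R ((transvection i j m (of l))⁻¹ * β (of l))).toAdd = p ^ k • w :=
    exists_toAdd_toFinsupp_eq_smul_of_mem_stallings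
      (QuotientGroup.eq.mp (DFunLike.congr_fun hβ (of l)).symm)
  choose w hw using hw
  refine ⟨linearCombination R w,
    toAdd_apply_eq_apply_toFinsupp ((toFinsupp R).comp β) _ fun l => ?_⟩
  rw [MonoidHom.comp_apply, ← mul_inv_cancel_left (transvection i j m (of l)) (β (of l)),
    _root_.map_mul, toAdd_mul, hw, toAdd_toFinsupp_transvection, LinearMap.add_apply,
    toAdd_toFinsupp_of, ← Nat.cast_smul_eq_nsmul R]
  simp

open Finsupp in
theorem toAdd_toFinsupp_iterate_of_comp_mk_eq_transvection {p k : ℕ} (hk : 2 ≤ k)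
    (hpR : (p : R) ^ (k + 1) = 0) (hij : i ≠ j) {β : FreeGroup ι →* FreeGroup ι}
    (hβ : (QuotientGroup.mk' (stallings p (FreeGroup ι) (k + 1))).comp β =
      (QuotientGroup.mk' _).comp (transvection i j (p ^ (k - 1) : ℕ))) :
    (toFinsupp R (β^[p] (of i))).toAdd =
      single i 1 + (p : R) ^ k • single j 1 := by
  obtain ⟨E, hE⟩ := exists_toAdd_toFinsupp_eq_of_comp_mk_eq_transvection (R := R) hβ
  have hN : (lsingle j ∘ₗ lapply i) * (lsingle j ∘ₗ lapply i) =
      (0 : Module.End R (ι →₀ R)) :=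
    LinearMap.ext fun v => by simp [hij.symm]
  push_cast at hE
  refine (Function.Semiconj.iterate_right (f := fun g => (toFinsupp R g).toAdd) hE p
    (of i)).trans ?_
  rw [← Module.End.coe_pow, one_add_smul_add_smul_pow hk hpR hN E]
  simp

theorem mk_iterate_of_ne_of_comp_mk_eq_transvection {p k : ℕ} (hp : 1 < p) (hk : 2 ≤ k)
    (hij : i ≠ j) {β : FreeGroup ι →* FreeGroup ι}
    (hβ : (QuotientGroup.mk' (stallings p (FreeGroup ι) (k + 1))).comp β =
      (QuotientGroup.mk' _).comp (transvection i j (p ^ (k - 1) : ℕ))) :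
    (β^[p] (of i) : FreeGroup ι ⧸ stallings p (FreeGroup ι) (k + 2)) ≠ of i := by
  intro h
  have hpR : (p : ZMod (p ^ (k + 1))) ^ (k + 1) = 0 := by rw [← Nat.cast_pow, ZMod.natCast_self]
  obtain ⟨w, hw⟩ := exists_toAdd_toFinsupp_eq_smul_of_mem_stallings (R := ZMod (p ^ (k + 1)))
    (QuotientGroup.eq.mp h)
  rw [_root_.map_mul, _root_.map_inv, toAdd_mul, toAdd_inv,
    toAdd_toFinsupp_iterate_of_comp_mk_eq_transvection hk hpR hij hβ, toAdd_toFinsupp_of,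
    ← Nat.cast_smul_eq_nsmul (ZMod (p ^ (k + 1))), Nat.cast_pow, hpR, zero_smul] at hw
  have hpk : ((p ^ k : ℕ) : ZMod (p ^ (k + 1))) = 0 := by
    simpa using congrArg (· j) hw
  rw [ZMod.natCast_eq_zero_iff, Nat.pow_dvd_pow_iff_le_right hp] at hpk
  omega

end ToFinsupp

end FreeGroup

theorem aut_extension_does_not_split (n p : ℕ) (hp : p.Prime) (hn : 1 < n)
    (k : ℕ) (hk : 2 ≤ k) :
    ¬ ∃ s : MulAut (FreeGroup (Fin n) ⧸ stallings p (FreeGroup (Fin n)) (k + 1)) →*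
          MulAut (FreeGroup (Fin n) ⧸ stallings p (FreeGroup (Fin n)) (k + 2)),
        ∀ φ x, stallingsProj p (FreeGroup (Fin n)) (k + 1) (k + 2) (Nat.le_succ _) (s φ x) =
          φ (stallingsProj p (FreeGroup (Fin n)) (k + 1) (k + 2) (Nat.le_succ _) x) := by
  rintro ⟨s, hs⟩
  have hij : (⟨0, by omega⟩ : Fin n) ≠ ⟨1, hn⟩ := by simp [Fin.ext_iff]
  set N₁ := stallings p (FreeGroup (Fin n)) (k + 1)
  set N₂ := stallings p (FreeGroup (Fin n)) (k + 2)
  set α := FreeGroup.transvectionEquiv hij (p ^ (k - 1) : ℕ)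
  have hN₁ : N₁.map α = N₁ := Subgroup.characteristic_iff_map_eq.mp inferInstance α
  set φ := QuotientGroup.congr N₁ N₁ α hN₁
  obtain ⟨β, hβ⟩ := FreeGroup.exists_comp_eq_of_surjective (QuotientGroup.mk'_surjective N₂)
    ((s φ).toMonoidHom.comp (QuotientGroup.mk' N₂))
  have hβ₂ : Function.Semiconj (QuotientGroup.mk' N₂) β (s φ) := DFunLike.congr_fun hβ
  have hβ₁ : (QuotientGroup.mk' N₁).comp β = (QuotientGroup.mk' N₁).comp α :=
    FreeGroup.ext_hom _ _ fun l =>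
      calc QuotientGroup.mk' N₁ (β (.of l))
          = stallingsProj p _ (k + 1) (k + 2) (Nat.le_succ _)
              (QuotientGroup.mk' N₂ (β (.of l))) := rfl
        _ = φ (QuotientGroup.mk' N₁ (.of l)) := by rw [hβ₂ (.of l), hs]; rfl
        _ = QuotientGroup.mk' N₁ (α (.of l)) := QuotientGroup.congr_mk' _ _ _ _ _
  refine FreeGroup.mk_iterate_of_ne_of_comp_mk_eq_transvection hp.one_lt hk hij hβ₁ ?_
  rw [← QuotientGroup.mk'_apply, ← QuotientGroup.mk'_apply, hβ₂.iterate_right p,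
    ← MulAut.coe_pow, ← map_pow,
    FreeGroup.congr_transvectionEquiv_pow_eq_one (by omega) hij hN₁, map_one]
  rfl
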